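/- arXiv:0911.2356 — 3 statements merged into one kernel-verified Lean document; each statement's English description precedes it below -/
import Mathlib

section
/- If X, Y, Z are jointly Gaussian real random variables with mean zero, then E[YZ e^X] = exp(E[X^2]/2) · (E[YZ] + E[XY]·E[XZ]). -/
/-!
Tilt `μ` by `e^X`. Since `X + tW` is centered Gaussian, `E[e^{X + tW}] = exp(E[(X + tW)²]/2)`,
so under the tilted measure `W` has mgf `exp(t E[XW] + t² E[W²]/2)`: it is Gaussian with mean
`E[XW]` and variance `E[W²]`. Its second moment there is `E[W²] + E[XW]²`, and polarizing in
`W = Y, Z, Y + Z` gives `E_tilt[YZ] = E[YZ] + E[XY] E[XZ]`. Finally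
`E[YZ e^X] = E[e^X] E_tilt[YZ]` with `E[e^X] = exp(E[X²]/2)`.
-/

open MeasureTheory ProbabilityTheory Real
open scoped NNReal

section GaussianLaw

variable {Ω : Type*} [MeasurableSpace Ω] {μ : Measure Ω} {X : Ω → ℝ} {m : ℝ} {v : ℝ≥0}

lemma aemeasurable_of_map_eq_gaussianReal (h : μ.map X = gaussianReal m v) :
    AEMeasurable X μ :=
  aemeasurable_of_map_neZero (by rw [h]; infer_instance)

lemma memLp_two_of_map_eq_gaussianReal (h : μ.map X = gaussianReal m v) : MemLp X 2 μ := by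
  have hid : MemLp id 2 (μ.map X) := h ▸ memLp_id_gaussianReal 2
  exact (memLp_map_measure_iff hid.1 (aemeasurable_of_map_eq_gaussianReal h)).1 hid

lemma integral_sq_of_map_eq_gaussianReal (h : μ.map X = gaussianReal m v) :
    ∫ ω, X ω ^ 2 ∂μ = v + m ^ 2 := by
  have hvar := variance_eq_sub (memLp_id_gaussianReal (μ := m) (v := v) 2)
  simp only [variance_id_gaussianReal, Pi.pow_apply, id_eq, integral_id_gaussianReal] at hvar
  rw [← integral_map (f := fun x : ℝ => x ^ 2) (aemeasurable_of_map_eq_gaussianReal h)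
    (by fun_prop), h]
  linarith

lemma integral_exp_of_map_eq_gaussianReal (h : μ.map X = gaussianReal m v) :
    ∫ ω, exp (X ω) ∂μ = exp (m + v / 2) := by
  simpa [mgf] using mgf_gaussianReal h 1

lemma integrable_exp_of_map_eq_gaussianReal [IsProbabilityMeasure μ]
    (h : μ.map X = gaussianReal m v) : Integrable (fun ω => exp (X ω)) μ := by
  have hpos : 0 < mgf X μ 1 := by
    rw [mgf_gaussianReal h]
    exact exp_pos _
  simpa using mgf_pos_iff.1 hpos

lemma map_eq_gaussianReal_of_mgf_eq [IsProbabilityMeasure μ] (hX : AEMeasurable X μ)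
    (h : ∀ t, mgf X μ t = exp (m * t + v * t ^ 2 / 2)) : μ.map X = gaussianReal m v := by
  have hmgf : mgf X μ = mgf id (gaussianReal m v) := by
    rw [mgf_id_gaussianReal]; exact funext h
  have hc : complexMGF X μ = complexMGF id (gaussianReal m v) := by
    ext z
    refine eqOn_complexMGF_of_mgf hmgf ?_
    simp [integrableExpSet_eq_of_mgf hmgf]
  simpa using Measure.ext_of_complexMGF_eq hX aemeasurable_id hc

end GaussianLaw

lemma integral_mul_exp_eq_mul_integral_tilted {Ω : Type*} [MeasurableSpace Ω] {μ : Measure Ω}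
    {f : Ω → ℝ} (g : Ω → ℝ) (hf : ∫ ω, exp (f ω) ∂μ ≠ 0) :
    ∫ ω, g ω * exp (f ω) ∂μ = (∫ ω, exp (f ω) ∂μ) * ∫ ω, g ω ∂(μ.tilted f) := by
  rw [integral_tilted, ← integral_const_mul]
  congr 1 with ω
  rw [smul_eq_mul]
  field_simp

section SecondMoments

variable {Ω : Type*} [MeasurableSpace Ω] {μ : Measure Ω} {F G : Ω → ℝ}

lemma integral_add_mul_sq (hF : MemLp F 2 μ) (hG : MemLp G 2 μ) (t : ℝ) :
    ∫ ω, (F ω + t * G ω) ^ 2 ∂μ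
      = ∫ ω, F ω ^ 2 ∂μ + 2 * t * ∫ ω, F ω * G ω ∂μ + t ^ 2 * ∫ ω, G ω ^ 2 ∂μ := by
  have hFG : Integrable (fun ω => F ω * G ω) μ := hF.integrable_mul hG
  calc ∫ ω, (F ω + t * G ω) ^ 2 ∂μ
      = ∫ ω, F ω ^ 2 + 2 * t * (F ω * G ω) + t ^ 2 * G ω ^ 2 ∂μ := by
        congr 1 with ω; ring
    _ = _ := by
      rw [integral_add, integral_add, integral_const_mul, integral_const_mul]
      exacts [hF.integrable_sq, hFG.const_mul _, hF.integrable_sq.add (hFG.const_mul _),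
        hG.integrable_sq.const_mul _]

lemma integral_mul_eq_polarization (hF : MemLp F 2 μ) (hG : MemLp G 2 μ) :
    ∫ ω, F ω * G ω ∂μ
      = (∫ ω, (F ω + G ω) ^ 2 ∂μ - ∫ ω, F ω ^ 2 ∂μ - ∫ ω, G ω ^ 2 ∂μ) / 2 := by
  have h := integral_add_mul_sq hF hG 1
  simp only [one_mul, one_pow] at h
  linarith

end SecondMoments

def IsCenteredGaussianPair {Ω : Type*} [MeasurableSpace Ω] (μ : Measure Ω) (U V : Ω → ℝ) :
    Prop :=
  ∀ a b : ℝ, ∃ v : ℝ≥0, μ.map (fun ω => a * U ω + b * V ω) = gaussianReal 0 v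

namespace IsCenteredGaussianPair

variable {Ω : Type*} [MeasurableSpace Ω] {μ : Measure Ω} {U V W : Ω → ℝ}

lemma memLp_two_left (h : IsCenteredGaussianPair μ U V) : MemLp U 2 μ := by
  obtain ⟨v, hv⟩ := h 1 0
  exact memLp_two_of_map_eq_gaussianReal (v := v) (by simpa using hv)

lemma memLp_two_right (h : IsCenteredGaussianPair μ U V) : MemLp V 2 μ := by
  obtain ⟨v, hv⟩ := h 0 1
  exact memLp_two_of_map_eq_gaussianReal (v := v) (by simpa using hv)

lemma integral_exp_add_mul (h : IsCenteredGaussianPair μ U V) (t : ℝ) :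
    ∫ ω, exp (U ω + t * V ω) ∂μ
      = exp ((∫ ω, U ω ^ 2 ∂μ + 2 * t * ∫ ω, U ω * V ω ∂μ + t ^ 2 * ∫ ω, V ω ^ 2 ∂μ) / 2) := by
  obtain ⟨v, hv⟩ := h 1 t
  simp only [one_mul] at hv
  rw [integral_exp_of_map_eq_gaussianReal hv, ← integral_add_mul_sq h.memLp_two_left
    h.memLp_two_right, integral_sq_of_map_eq_gaussianReal hv]
  ring_nf

lemma integral_exp_left (h : IsCenteredGaussianPair μ U V) :
    ∫ ω, exp (U ω) ∂μ = exp ((∫ ω, U ω ^ 2 ∂μ) / 2) := by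
  simpa using h.integral_exp_add_mul 0

lemma integrable_exp_left [IsProbabilityMeasure μ] (h : IsCenteredGaussianPair μ U V) :
    Integrable (fun ω => exp (U ω)) μ := by
  obtain ⟨v, hv⟩ := h 1 0
  exact integrable_exp_of_map_eq_gaussianReal (v := v) (by simpa using hv)

lemma map_tilted [IsProbabilityMeasure μ] (h : IsCenteredGaussianPair μ U V) :
    (μ.tilted U).map V
      = gaussianReal (∫ ω, U ω * V ω ∂μ)
          (⟨∫ ω, V ω ^ 2 ∂μ, integral_nonneg fun _ => sq_nonneg _⟩ : ℝ≥0) := by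
  have := isProbabilityMeasure_tilted h.integrable_exp_left
  refine map_eq_gaussianReal_of_mgf_eq
    (h.memLp_two_right.aemeasurable.mono_ac (tilted_absolutelyContinuous μ U)) fun t => ?_
  rw [mgf, integral_exp_tilted U (fun ω => t * V ω)]
  simp only [Pi.add_apply]
  rw [h.integral_exp_add_mul, h.integral_exp_left, ← exp_sub]
  change _ = exp (_ * t + (∫ ω, V ω ^ 2 ∂μ) * t ^ 2 / 2)
  ring_nf

lemma memLp_two_tilted [IsProbabilityMeasure μ] (h : IsCenteredGaussianPair μ U V) :
    MemLp V 2 (μ.tilted U) :=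
  memLp_two_of_map_eq_gaussianReal h.map_tilted

lemma integral_sq_tilted [IsProbabilityMeasure μ] (h : IsCenteredGaussianPair μ U V) :
    ∫ ω, V ω ^ 2 ∂(μ.tilted U) = ∫ ω, V ω ^ 2 ∂μ + (∫ ω, U ω * V ω ∂μ) ^ 2 :=
  integral_sq_of_map_eq_gaussianReal h.map_tilted

lemma integral_mul_tilted [IsProbabilityMeasure μ] (hV : IsCenteredGaussianPair μ U V)
    (hW : IsCenteredGaussianPair μ U W) (hVW : IsCenteredGaussianPair μ U (fun ω => V ω + W ω)) :
    ∫ ω, V ω * W ω ∂(μ.tilted U)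
      = ∫ ω, V ω * W ω ∂μ + (∫ ω, U ω * V ω ∂μ) * ∫ ω, U ω * W ω ∂μ := by
  have hUVW : ∫ ω, U ω * (V ω + W ω) ∂μ = ∫ ω, U ω * V ω ∂μ + ∫ ω, U ω * W ω ∂μ := by
    simp only [mul_add]
    exact integral_add (hV.memLp_two_left.integrable_mul hV.memLp_two_right)
      (hW.memLp_two_left.integrable_mul hW.memLp_two_right)
  rw [integral_mul_eq_polarization hV.memLp_two_tilted hW.memLp_two_tilted,
    hVW.integral_sq_tilted, hV.integral_sq_tilted, hW.integral_sq_tilted, hUVW,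
    integral_mul_eq_polarization hV.memLp_two_right hW.memLp_two_right]
  ring

end IsCenteredGaussianPair

theorem stmt1_general {Ω : Type*} [MeasurableSpace Ω] (μ : Measure Ω) [IsProbabilityMeasure μ]
    (X Y Z : Ω → ℝ)
    (hGauss : ∀ a b c : ℝ, ∃ v : NNReal,
      μ.map (fun ω => a * X ω + b * Y ω + c * Z ω) = gaussianReal 0 v) :
    ∫ ω, Y ω * Z ω * Real.exp (X ω) ∂μ
      = Real.exp ((∫ ω, X ω ^ 2 ∂μ) / 2)
        * ((∫ ω, Y ω * Z ω ∂μ) + (∫ ω, X ω * Y ω ∂μ) * ∫ ω, X ω * Z ω ∂μ) := by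
  have hXY : IsCenteredGaussianPair μ X Y := fun a b => by simpa using hGauss a b 0
  have hXZ : IsCenteredGaussianPair μ X Z := fun a b => by simpa using hGauss a 0 b
  have hXYZ : IsCenteredGaussianPair μ X (fun ω => Y ω + Z ω) := fun a b => by
    simpa only [mul_add, add_assoc] using hGauss a b b
  rw [integral_mul_exp_eq_mul_integral_tilted _ (integral_exp_pos hXY.integrable_exp_left).ne',
    hXY.integral_exp_left, hXY.integral_mul_tilted hXZ hXYZ]

/-- If X, Y, Z are jointly Gaussian real random variables with mean zero, then
`E[YZ e^X] = exp(E[X^2]/2) * (E[YZ] + E[XY]E[XZ])`. Joint Gaussianity (centered)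
is expressed by: every linear combination has a centered Gaussian distribution. -/
theorem stmt1 {Ω : Type*} [MeasurableSpace Ω] (μ : Measure Ω) [IsProbabilityMeasure μ]
    (X Y Z : Ω → ℝ) (hX : Measurable X) (hY : Measurable Y) (hZ : Measurable Z)
    (hGauss : ∀ a b c : ℝ, ∃ v : NNReal,
      μ.map (fun ω => a * X ω + b * Y ω + c * Z ω) = gaussianReal 0 v) :
    ∫ ω, Y ω * Z ω * Real.exp (X ω) ∂μ
      = Real.exp ((∫ ω, X ω ^ 2 ∂μ) / 2)
        * ((∫ ω, Y ω * Z ω ∂μ) + (∫ ω, X ω * Y ω ∂μ) * ∫ ω, X ω * Z ω ∂μ) :=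
  stmt1_general μ X Y Z hGauss
end

section
/- Let H be a real Hilbert space, S a nonnegative self-adjoint operator, A a skew-adjoint operator on H with common dense domain, G = −S + A, and λ > 0. Then for any φ in the domain, (φ, (λ − G)^{-1} φ) ≤ (φ, (λ + S)^{-1} φ). -/
/-! With `T = λ + S`, skewness of `A` gives `⟪φ, χ⟫ = ⟪T χ, χ⟫`, and then
`⟪φ, θ⟫ - ⟪φ, χ⟫ = ⟪T (θ - χ), θ - χ⟫ ≥ 0` by symmetry of `T`. -/

open scoped RealInnerProductSpace

section

variable {E : Type*} [NormedAddCommGroup E] [InnerProductSpace ℝ E]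

theorem inner_map_self_eq_zero_of_skew {A : E →ₗ[ℝ] E}
    (hA : ∀ x y : E, ⟪A x, y⟫ = -⟪x, A y⟫) (x : E) : ⟪A x, x⟫ = 0 := by
  linarith [hA x x, real_inner_comm x (A x)]

theorem LinearMap.IsPositive.inner_le_inner_of_apply_eq {T : E →ₗ[ℝ] E} (hT : T.IsPositive)
    {φ χ θ : E} (hθ : T θ = φ) (hχ : ⟪φ, χ⟫ = ⟪T χ, χ⟫) : ⟪φ, χ⟫ ≤ ⟪φ, θ⟫ := by
  have hgap : ⟪T (θ - χ), θ - χ⟫ = ⟪φ, θ⟫ - ⟪φ, χ⟫ := by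
    have hsym : ⟪T χ, θ⟫ = ⟪φ, χ⟫ := by
      rw [hT.isSymmetric, hθ, real_inner_comm]
    simp only [map_sub, inner_sub_left, inner_sub_right, hsym, hθ, hχ]
    ring
  linarith [hT.inner_nonneg_left (θ - χ)]

end

/-- Resolvent upper bound: for `S ≥ 0` symmetric, `A` skew-symmetric, `G = -S + A`, `λ > 0`,
if `χ = (λ - G)⁻¹ φ` and `θ = (λ + S)⁻¹ φ`, then `(φ, (λ-G)⁻¹φ) ≤ (φ, (λ+S)⁻¹φ)`. -/
theorem stmt12 {H : Type*} [NormedAddCommGroup H] [InnerProductSpace ℝ H]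
    (S A : H →L[ℝ] H)
    (hS_sym : ∀ x y : H, ⟪S x, y⟫ = ⟪x, S y⟫)
    (hS_pos : ∀ x : H, 0 ≤ ⟪S x, x⟫)
    (hA_skew : ∀ x y : H, ⟪A x, y⟫ = -⟪x, A y⟫)
    (l : ℝ) (hl : 0 < l) (φ χ θ : H)
    (hχ : l • χ - (-S + A) χ = φ)
    (hθ : l • θ + S θ = φ) :
    ⟪φ, χ⟫ ≤ ⟪φ, θ⟫ := by
  have hS : S.IsPositive := (S.isPositive_iff).2 ⟨hS_sym, hS_pos⟩
  have hT : (l • (1 : H →L[ℝ] H) + S).IsPositive :=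
    (ContinuousLinearMap.isPositive_one.smul_of_nonneg hl.le).add hS
  refine hT.toLinearMap.inner_le_inner_of_apply_eq (by simpa using hθ) ?_
  have hAχ : ⟪A χ, χ⟫ = 0 := inner_map_self_eq_zero_of_skew (A := (A : H →ₗ[ℝ] H)) hA_skew χ
  rw [← hχ]
  simp [inner_sub_left, inner_add_left, hAχ]
end

section
/- Let −1 < α < 1 and let b̂ : ℝ → [0,∞) be integrable with b̂(p) ≤ 2C₁|p|^α for |p| < δ (δ > 0, C₁ < ∞). Define K(λ,p) := (1/√(2π)) ∫_ℝ b̂(q−p)/(λ + q²/2) dq. Then there exists C < ∞ such that for all sufficiently small λ > 0 and all |p| < √λ, K(λ,p) ≤ C λ^{(α−1)/2}. -/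
/-!
Split the integral at `|q| = δ/2`. Near the origin `|q - p| < δ`, so `b̂(q - p)` may be
replaced by `2C₁|q - p|^α`; the substitution `q = √λ r` turns the resulting integral into
`λ^{(α-1)/2} ∫ |r - p/√λ|^α / (1 + r²/2) dr`, and the last integral is bounded uniformly in
`|p/√λ| ≤ 1` because `α > -1` makes the singularity at `r = p/√λ` integrable and `α < 1`
makes the tail `|r|^{α-2}` integrable. Away from the origin `1/(λ + q²/2) ≤ 8/δ²`, which
costs `∫ b̂`, and `λ^{(α-1)/2} ≥ 1` for `λ ≤ 1`.
-/

open MeasureTheory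

theorem Real.rpow_le_rpow_add_rpow_of_mem_Icc {u v t : ℝ} (α : ℝ) (hu : 0 < u)
    (ht : t ∈ Set.Icc u v) : t ^ α ≤ u ^ α + v ^ α := by
  have hv : 0 < v := hu.trans_le (ht.1.trans ht.2)
  rcases le_total 0 α with hα | hα
  · linarith [Real.rpow_le_rpow (hu.le.trans ht.1) ht.2 hα, Real.rpow_nonneg hu.le α]
  · linarith [Real.rpow_le_rpow_of_nonpos hu ht.1 hα, Real.rpow_nonneg hv.le α]

theorem locallyIntegrable_abs_rpow {α : ℝ} (hα : -1 < α) :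
    LocallyIntegrable (fun x : ℝ => |x| ^ α) :=
  locallyIntegrable_of_norm_le_rpow (C := 1) (α := -α) (by simp) (by simp; linarith)
    (.of_forall fun x => by
      simp [Real.norm_eq_abs, abs_of_nonneg (Real.rpow_nonneg (abs_nonneg x) α)])
    (continuous_abs.measurable.pow_const α).aestronglyMeasurable

-- The tail term has the shape of `integrable_one_add_norm`.
theorem abs_sub_rpow_div_one_add_sq_le {α s : ℝ} (hs : |s| ≤ 1) (r : ℝ) :
    |r - s| ^ α / (1 + r ^ 2 / 2) ≤
      (Set.Icc (-3) 3).indicator (fun t => |t| ^ α) (r - s) +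
        4 * ((3⁻¹ : ℝ) ^ α + 1) * (1 + |r|) ^ (-(2 - α)) := by
  have hnum : 0 ≤ |r - s| ^ α := Real.rpow_nonneg (abs_nonneg _) α
  have hfar : 0 ≤ 4 * ((3⁻¹ : ℝ) ^ α + 1) * (1 + |r|) ^ (-(2 - α)) := by positivity
  rcases le_or_gt |r| 2 with hr | hr
  · have hmem : r - s ∈ Set.Icc (-3) 3 := abs_le.mp (by linarith [abs_sub r s])
    rw [Set.indicator_of_mem hmem]
    have : |r - s| ^ α / (1 + r ^ 2 / 2) ≤ |r - s| ^ α :=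
      div_le_self hnum (by nlinarith [sq_nonneg r])
    linarith
  · have hmem : |r - s| ∈ Set.Icc (3⁻¹ * (1 + |r|)) (1 + |r|) :=
      ⟨by linarith [abs_sub_abs_le_abs_sub r s], by linarith [abs_sub r s]⟩
    have hpow := Real.rpow_le_rpow_add_rpow_of_mem_Icc α (by positivity) hmem
    rw [Real.mul_rpow (by norm_num) (by positivity)] at hpow
    have hden : (1 + |r|) ^ 2 ≤ 4 * (1 + r ^ 2 / 2) := by
      nlinarith [sq_abs r, sq_nonneg (|r| - 1)]
    have h1r : 0 < 1 + |r| := by positivity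
    have key : |r - s| ^ α / (1 + r ^ 2 / 2) ≤
        4 * ((3⁻¹ : ℝ) ^ α + 1) * (1 + |r|) ^ (-(2 - α)) := by
      rw [neg_sub, Real.rpow_sub h1r, Real.rpow_two, div_le_iff₀ (by positivity)]
      calc |r - s| ^ α ≤ ((3⁻¹ : ℝ) ^ α + 1) * (1 + |r|) ^ α := by linarith
        _ ≤ ((3⁻¹ : ℝ) ^ α + 1) * (1 + |r|) ^ α * (4 * (1 + r ^ 2 / 2) / (1 + |r|) ^ 2) :=
          le_mul_of_one_le_right (by positivity) ((one_le_div (by positivity)).mpr hden)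
        _ = _ := by ring
    linarith [Set.indicator_nonneg (s := Set.Icc (-3 : ℝ) 3)
      (fun t _ => Real.rpow_nonneg (abs_nonneg t) α) (r - s)]

theorem exists_integral_abs_sub_rpow_div_one_add_sq_le {α : ℝ} (hα₁ : -1 < α)
    (hα₂ : α < 1) :
    ∃ K, ∀ s : ℝ, |s| ≤ 1 →
      Integrable (fun r => |r - s| ^ α / (1 + r ^ 2 / 2)) ∧
        ∫ r, |r - s| ^ α / (1 + r ^ 2 / 2) ≤ K := by
  set near := (Set.Icc (-3 : ℝ) 3).indicator (fun t => |t| ^ α)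
  set far := fun r : ℝ => 4 * ((3⁻¹ : ℝ) ^ α + 1) * (1 + |r|) ^ (-(2 - α))
  have h_near : Integrable near :=
    ((locallyIntegrable_abs_rpow hα₁).integrableOn_isCompact isCompact_Icc).integrable_indicator
      measurableSet_Icc
  have h_far : Integrable far :=
    (integrable_one_add_norm (E := ℝ) (μ := volume) (by simp; linarith)).const_mul _
  refine ⟨(∫ t, near t) + ∫ r, far r, fun s hs => ?_⟩
  have h_maj : Integrable fun r => near (r - s) + far r := (h_near.comp_sub_right s).add h_far
  have h_le : ∀ r, |r - s| ^ α / (1 + r ^ 2 / 2) ≤ near (r - s) + far r :=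
    abs_sub_rpow_div_one_add_sq_le hs
  have h_nonneg : ∀ r, 0 ≤ |r - s| ^ α / (1 + r ^ 2 / 2) := fun r => by positivity
  refine ⟨h_maj.mono' (by fun_prop : Measurable _).aestronglyMeasurable
    (.of_forall fun r => ?_), ?_⟩
  · rw [Real.norm_of_nonneg (h_nonneg r)]; exact h_le r
  · calc ∫ r, |r - s| ^ α / (1 + r ^ 2 / 2) ≤ ∫ r, near (r - s) + far r :=
          integral_mono_of_nonneg (.of_forall h_nonneg) h_maj (.of_forall h_le)
      _ = (∫ t, near t) + ∫ r, far r := by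
          rw [integral_add (h_near.comp_sub_right s) h_far, integral_sub_right_eq_self]

theorem abs_sub_rpow_div_sq_add_eq (α p q : ℝ) {a : ℝ} (ha : 0 < a) :
    |q - p| ^ α / (a ^ 2 + q ^ 2 / 2) =
      a ^ (α - 2) * (|q / a - p / a| ^ α / (1 + (q / a) ^ 2 / 2)) := by
  have h_abs : |q - p| = a * |q / a - p / a| := by
    rw [← abs_of_pos ha, ← abs_mul, abs_of_pos ha]; congr 1; field_simp
  rw [h_abs, Real.mul_rpow ha.le (abs_nonneg _), Real.rpow_sub ha, Real.rpow_two]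
  field_simp

theorem exists_integral_abs_sub_rpow_div_sq_add_le {α : ℝ} (hα₁ : -1 < α) (hα₂ : α < 1) :
    ∃ K, ∀ a : ℝ, 0 < a → ∀ p : ℝ, |p| ≤ a →
      Integrable (fun q => |q - p| ^ α / (a ^ 2 + q ^ 2 / 2)) ∧
        ∫ q, |q - p| ^ α / (a ^ 2 + q ^ 2 / 2) ≤ K * a ^ (α - 1) := by
  obtain ⟨K, hK⟩ := exists_integral_abs_sub_rpow_div_one_add_sq_le hα₁ hα₂
  refine ⟨K, fun a ha p hp => ?_⟩
  obtain ⟨h_int, h_le⟩ :=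
    hK (p / a) (by rw [abs_div, abs_of_pos ha]; exact div_le_one_of_le₀ hp ha.le)
  simp_rw [abs_sub_rpow_div_sq_add_eq α p _ ha]
  refine ⟨(h_int.comp_div ha.ne').const_mul _, ?_⟩
  rw [integral_const_mul, Measure.integral_comp_div
    (fun r => |r - p / a| ^ α / (1 + r ^ 2 / 2)), abs_of_pos ha, smul_eq_mul]
  calc a ^ (α - 2) * (a * ∫ r, |r - p / a| ^ α / (1 + r ^ 2 / 2))
      = a ^ (α - 1) * ∫ r, |r - p / a| ^ α / (1 + r ^ 2 / 2) := by
        rw [← mul_assoc, ← Real.rpow_add_one ha.ne', show α - 2 + 1 = α - 1 by ring]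
    _ ≤ K * a ^ (α - 1) := by rw [mul_comm]; gcongr

theorem div_sq_add_le_of_le_near_zero {f g : ℝ → ℝ} {δ l p : ℝ} (hδ : 0 < δ) (hl : 0 < l)
    (hp : |p| < δ / 2) (hf : ∀ t, 0 ≤ f t) (hg : ∀ t, 0 ≤ g t)
    (hfg : ∀ t, |t| < δ → f t ≤ g t) (q : ℝ) :
    f (q - p) / (l + q ^ 2 / 2) ≤ g (q - p) / (l + q ^ 2 / 2) + 8 / δ ^ 2 * f (q - p) := by
  have h_far : 0 ≤ 8 / δ ^ 2 * f (q - p) := mul_nonneg (by positivity) (hf _)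
  have h_near : 0 ≤ g (q - p) / (l + q ^ 2 / 2) := div_nonneg (hg _) (by positivity)
  rcases le_or_gt |q| (δ / 2) with hq | hq
  · have : f (q - p) / (l + q ^ 2 / 2) ≤ g (q - p) / (l + q ^ 2 / 2) :=
      div_le_div_of_nonneg_right (hfg _ (by linarith [abs_sub q p])) (by positivity)
    linarith
  · have hq2 : δ ^ 2 / 8 ≤ l + q ^ 2 / 2 := by
      nlinarith [sq_abs q, abs_nonneg q]
    have : f (q - p) / (l + q ^ 2 / 2) ≤ 8 / δ ^ 2 * f (q - p) := by
      rw [div_le_iff₀ (by positivity)]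
      calc f (q - p) = 8 / δ ^ 2 * f (q - p) * (δ ^ 2 / 8) := by field_simp
        _ ≤ 8 / δ ^ 2 * f (q - p) * (l + q ^ 2 / 2) := by gcongr
    linarith

theorem integral_div_sq_add_le_of_le_near_zero {f g : ℝ → ℝ} {δ l p : ℝ} (hδ : 0 < δ)
    (hl : 0 < l) (hp : |p| < δ / 2) (hf : ∀ t, 0 ≤ f t) (hg : ∀ t, 0 ≤ g t)
    (hfg : ∀ t, |t| < δ → f t ≤ g t) (hf_int : Integrable f)
    (hg_int : Integrable fun q => g (q - p) / (l + q ^ 2 / 2)) :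
    ∫ q, f (q - p) / (l + q ^ 2 / 2) ≤
      (∫ q, g (q - p) / (l + q ^ 2 / 2)) + 8 / δ ^ 2 * ∫ t, f t := by
  have hf_int' : Integrable fun q => 8 / δ ^ 2 * f (q - p) :=
    (hf_int.comp_sub_right p).const_mul _
  calc ∫ q, f (q - p) / (l + q ^ 2 / 2)
      ≤ ∫ q, g (q - p) / (l + q ^ 2 / 2) + 8 / δ ^ 2 * f (q - p) :=
        integral_mono_of_nonneg (.of_forall fun q => div_nonneg (hf _) (by positivity))
          (hg_int.add hf_int') (.of_forall (div_sq_add_le_of_le_near_zero hδ hl hp hf hg hfg))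
    _ = (∫ q, g (q - p) / (l + q ^ 2 / 2)) + 8 / δ ^ 2 * ∫ t, f t := by
        rw [integral_add hg_int hf_int', integral_const_mul, integral_sub_right_eq_self f p]

theorem stmt16_general (α : ℝ) (hα₁ : -1 < α) (hα₂ : α < 1)
    (bhat : ℝ → ℝ) (h_nonneg : ∀ p, 0 ≤ bhat p)
    (h_int : Integrable bhat)
    (C₁ δ : ℝ) (hδ : 0 < δ)
    (h_bound : ∀ p : ℝ, |p| < δ → bhat p ≤ 2 * C₁ * |p| ^ α) :
    ∃ C : ℝ, ∃ l₀ : ℝ, 0 < l₀ ∧ ∀ l : ℝ, 0 < l → l < l₀ →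
      ∀ p : ℝ, |p| < Real.sqrt l →
        (Real.sqrt (2 * Real.pi))⁻¹ * ∫ q : ℝ, bhat (q - p) / (l + q ^ 2 / 2)
          ≤ C * l ^ ((α - 1) / 2) := by
  have hC₁ : 0 ≤ C₁ := by
    have h := (h_nonneg _).trans (h_bound (δ / 2) (by rw [abs_of_pos (by positivity)]; linarith))
    have : 0 < |δ / 2| ^ α := Real.rpow_pos_of_pos (by positivity) α
    nlinarith
  obtain ⟨K, hK⟩ := exists_integral_abs_sub_rpow_div_sq_add_le hα₁ hα₂
  refine ⟨(Real.sqrt (2 * Real.pi))⁻¹ * (2 * C₁ * K + 8 / δ ^ 2 * ∫ x, bhat x),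
    min 1 (δ ^ 2 / 4), by positivity, fun l hl hl₀ p hp => ?_⟩
  have hp_near : |p| < δ / 2 := hp.trans <| (Real.sqrt_lt' (by positivity)).mpr <| by
    linarith [hl₀.trans_le (min_le_right _ _)]
  have h_one_le : 1 ≤ Real.sqrt l ^ (α - 1) :=
    Real.one_le_rpow_of_pos_of_le_one_of_nonpos (Real.sqrt_pos.mpr hl)
      (Real.sqrt_le_one.mpr (hl₀.trans_le (min_le_left _ _)).le) (by linarith)
  obtain ⟨h_kernel_int, h_kernel_le⟩ := hK (Real.sqrt l) (Real.sqrt_pos.mpr hl) p hp.le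
  rw [Real.sq_sqrt hl.le] at h_kernel_int h_kernel_le
  have h_split := integral_div_sq_add_le_of_le_near_zero (g := fun t => 2 * C₁ * |t| ^ α) hδ hl
    hp_near h_nonneg (fun t => by positivity) h_bound h_int
    (by simpa only [mul_div_assoc] using h_kernel_int.const_mul (2 * C₁))
  simp only [mul_div_assoc, integral_const_mul] at h_split
  have h_far :
      8 / δ ^ 2 * ∫ x, bhat x ≤ 8 / δ ^ 2 * (∫ x, bhat x) * Real.sqrt l ^ (α - 1) :=
    le_mul_of_one_le_right (mul_nonneg (by positivity) (integral_nonneg h_nonneg)) h_one_le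
  rw [Real.rpow_div_two_eq_sqrt _ hl.le, mul_assoc]
  gcongr
  nlinarith [mul_le_mul_of_nonneg_left h_kernel_le (by positivity : (0 : ℝ) ≤ 2 * C₁)]

/-- Upper bound on `K(λ,p) = (2π)^{-1/2} ∫ b̂(q-p)/(λ+q²/2) dq`: if `b̂ ≥ 0` is integrable
with `b̂(p) ≤ 2C₁|p|^α` for `|p| < δ` (`-1 < α < 1`), then there is `C < ∞` with
`K(λ,p) ≤ C λ^{(α-1)/2}` for all sufficiently small `λ > 0` and all `|p| < √λ`. -/
theorem stmt16 (α : ℝ) (hα₁ : -1 < α) (hα₂ : α < 1)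
    (bhat : ℝ → ℝ) (h_meas : Measurable bhat) (h_nonneg : ∀ p, 0 ≤ bhat p)
    (h_int : Integrable bhat)
    (C₁ δ : ℝ) (hδ : 0 < δ)
    (h_bound : ∀ p : ℝ, |p| < δ → bhat p ≤ 2 * C₁ * |p| ^ α) :
    ∃ C : ℝ, ∃ l₀ : ℝ, 0 < l₀ ∧ ∀ l : ℝ, 0 < l → l < l₀ →
      ∀ p : ℝ, |p| < Real.sqrt l →
        (Real.sqrt (2 * Real.pi))⁻¹ * ∫ q : ℝ, bhat (q - p) / (l + q ^ 2 / 2)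
          ≤ C * l ^ ((α - 1) / 2) :=
  stmt16_general α hα₁ hα₂ bhat h_nonneg h_int C₁ δ hδ h_bound
end
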